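/- Every Polish diversity (𝕌, δ_𝕌) with the extension property is ultrahomogeneous: for any finite subsets A, A' ⊆ 𝕌 and any bijection φ : A → A' with δ_𝕌(φ(B)) = δ_𝕌(B) for all B ⊆ A, there is a bijection Φ : 𝕌 → 𝕌 with δ_𝕌(Φ(C)) = δ_𝕌(C) for all finite C ⊆ 𝕌 that extends φ. -/

import Mathlib

open scoped Classical

/-- A diversity on `X`: a real-valued function on finite subsets satisfying
(D1) nonnegativity with `δ A = 0 ↔ |A| ≤ 1`, and (D2) the triangle inequality. -/
structure Diversity (X : Type*) where
  δ : Finset X → ℝ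
  nonneg : ∀ A : Finset X, 0 ≤ δ A
  eq_zero_iff : ∀ A : Finset X, δ A = 0 ↔ A.card ≤ 1
  triangle : ∀ A B C : Finset X, B.Nonempty → δ (A ∪ C) ≤ δ (A ∪ B) + δ (B ∪ C)

/-- An admissible function on a diversity (a one-point extension). -/
structure IsAdmissible {X : Type*} (D : Diversity X) (f : Finset X → ℝ) : Prop where
  empty : f ∅ = 0
  le : ∀ A : Finset X, D.δ A ≤ f A
  tri : ∀ A B C : Finset X, C.Nonempty → f (A ∪ B) ≤ f (A ∪ C) + D.δ (B ∪ C)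
  subadd : ∀ A B : Finset X, f (A ∪ B) ≤ f A + f B

/-- Restriction of a diversity to a subset. -/
noncomputable def Diversity.restrict {X : Type*} (D : Diversity X) (S : Set X) : Diversity S where
  δ A := D.δ (A.image Subtype.val)
  nonneg A := D.nonneg _
  eq_zero_iff A := by
    rw [D.eq_zero_iff, Finset.card_image_of_injective _ Subtype.val_injective]
  triangle A B C hB := by
    have h := D.triangle (A.image Subtype.val) (B.image Subtype.val) (C.image Subtype.val)
      (hB.image _)
    simpa [Finset.image_union] using h

/-- Separability of the induced metric `d a b = δ {a, b}`. -/
def Diversity.SeparableD {X : Type*} (D : Diversity X) : Prop :=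
  ∃ s : Set X, s.Countable ∧ ∀ x : X, ∀ ε : ℝ, 0 < ε → ∃ y ∈ s, D.δ {x, y} < ε

/-- Completeness of the induced metric `d a b = δ {a, b}`. -/
def Diversity.CompleteD {X : Type*} (D : Diversity X) : Prop :=
  ∀ u : ℕ → X, (∀ ε : ℝ, 0 < ε → ∃ N : ℕ, ∀ m ≥ N, ∀ n ≥ N, D.δ {u m, u n} < ε) →
    ∃ x : X, ∀ ε : ℝ, 0 < ε → ∃ N : ℕ, ∀ n ≥ N, D.δ {u n, x} < ε

/-- The diversity `δ̂` on (finite sets of) admissible functions. -/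
noncomputable def hatδ {X : Type*} (F : Finset (Finset X → ℝ)) : ℝ :=
  if F.card ≤ 1 then 0
  else sSup { r : ℝ | ∃ j ∈ F, ∃ A : (Finset X → ℝ) → Finset X,
    r = j ((F.erase j).biUnion A) - ∑ i ∈ F.erase j, i (A i) }

/-- The canonical maximal extension `f_S^X` of an admissible function on `S ⊆ X`. -/
noncomputable def extFun {X : Type*} (D : Diversity X) (S : Set X) (f : Finset S → ℝ)
    (A : Finset X) : ℝ :=
  sInf { r : ℝ | ∃ (B : Finset S) (As : S → Finset X),
    B.biUnion As = A ∧ r = f B + ∑ b ∈ B, D.δ (insert (b : X) (As b)) }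

/-- An admissible function is finitely supported if it is the canonical extension
of an admissible function on some finite nonempty `S ⊆ X`. -/
def FinitelySupported {X : Type*} (D : Diversity X) (f : Finset X → ℝ) : Prop :=
  ∃ S : Set X, S.Finite ∧ S.Nonempty ∧ ∃ g : Finset S → ℝ,
    IsAdmissible (D.restrict S) g ∧ f = extFun D S g

/-- The extension property for a diversity. -/
def Diversity.ExtensionProp {X : Type*} (D : Diversity X) : Prop :=
  ∀ F : Finset X, ∀ f : Finset ((F : Set X)) → ℝ,
    IsAdmissible (D.restrict (F : Set X)) f →
    ∃ x : X, ∀ A : Finset ((F : Set X)), D.δ (insert x (A.image Subtype.val)) = f A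

/-- The approximate extension property for a diversity. -/
def Diversity.ApproxExtensionProp {X : Type*} (D : Diversity X) : Prop :=
  ∀ F : Finset X, ∀ f : Finset ((F : Set X)) → ℝ,
    IsAdmissible (D.restrict (F : Set X)) f →
    ∀ ε : ℝ, 0 < ε →
      ∃ x : X, ∀ A : Finset ((F : Set X)), |D.δ (insert x (A.image Subtype.val)) - f A| ≤ ε

/-- Ultrahomogeneity: isomorphisms between finite subsets extend to automorphisms. -/
def Diversity.Ultrahomogeneous {X : Type*} (D : Diversity X) : Prop :=
  ∀ (A A' : Finset X) (φ : ((A : Set X)) → ((A' : Set X))), Function.Bijective φ →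
    (∀ B : Finset ((A : Set X)),
      D.δ (B.image (fun b => (φ b : X))) = D.δ (B.image Subtype.val)) →
    ∃ Φ : X → X, Function.Bijective Φ ∧ (∀ C : Finset X, D.δ (C.image Φ) = D.δ C) ∧
      ∀ a : ((A : Set X)), Φ a = (φ a : X)

/-!
Back and forth along a dense sequence `u`: the extension property adds one point at a time to a
finite partial isomorphism `P` (forth: the admissible function `B ↦ δ ({x} ∪ P⁻¹ B)` on the
range of `P` is realised by some `y`; back: the same for the inverse of `P`). The union of the
resulting chain is a partial isomorphism whose domain and range both contain `u`, hence are dense.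
A partial isomorphism is an isometry for `d(a, b) = δ {a, b}`, and `δ` is Lipschitz in each
point, so by completeness it extends to a `δ`-preserving map of the whole space, which is onto
because the range of the partial isomorphism is dense too.
-/

open Filter Topology Finset

theorem IsAdmissible.comap {X Y : Type*} {D : Diversity X} {E : Diversity Y} {f : Finset X → ℝ}
    (hf : IsAdmissible D f) (π : Finset Y → Finset X) (h_empty : π ∅ = ∅)
    (h_union : ∀ A B, π (A ∪ B) = π A ∪ π B) (h_δ : ∀ A, D.δ (π A) = E.δ A)
    (h_nonempty : ∀ A, A.Nonempty → (π A).Nonempty) : IsAdmissible E (f ∘ π) where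
  empty := by simp [h_empty, hf.empty]
  le A := h_δ A ▸ hf.le (π A)
  tri A B C hC := by
    have := hf.tri (π A) (π B) (π C) (h_nonempty C hC)
    rwa [← h_union, ← h_union, ← h_union, h_δ] at this
  subadd A B := by simpa only [Function.comp, h_union] using hf.subadd (π A) (π B)

theorem Dense.exists_seq_mem_tendsto_image {α β : Type*} [TopologicalSpace β]
    [FrechetUrysohnSpace β] {s : Set α} {f : α → β} (hs : Dense (f '' s)) (b : β) :
    ∃ v : ℕ → α, (∀ k, v k ∈ s) ∧ Tendsto (fun k => f (v k)) atTop (𝓝 b) := by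
  obtain ⟨w, hw, hwb⟩ := mem_closure_iff_seq_limit.1 (hs.closure_eq ▸ Set.mem_univ b)
  choose v hv hvw using hw
  exact ⟨v, hv, by simpa only [hvw] using hwb⟩

namespace Diversity

section Basic

variable {X : Type*} (D : Diversity X)

theorem δ_singleton (x : X) : D.δ {x} = 0 :=
  (D.eq_zero_iff _).2 (by simp)

theorem eq_of_δ_pair_eq_zero {x y : X} (h : D.δ {x, y} = 0) : x = y :=
  Finset.card_le_one.1 ((D.eq_zero_iff _).1 h) x (by simp) y (by simp)

theorem δ_pair_triangle (x y z : X) : D.δ {x, z} ≤ D.δ {x, y} + D.δ {y, z} := by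
  simpa using D.triangle {x} {y} {z} (by simp)

theorem δ_le_δ_insert (s : Finset X) (x : X) : D.δ s ≤ D.δ (insert x s) := by
  have h := D.triangle s {x} ∅ (by simp)
  rwa [union_empty, union_empty, D.δ_singleton, add_zero, union_comm, ← insert_eq] at h

theorem δ_insert_le (s : Finset X) (x y : X) :
    D.δ (insert x s) ≤ D.δ (insert y s) + D.δ {y, x} := by
  have h := D.triangle s {y} {x} (by simp)
  rwa [union_comm s, union_comm s, ← insert_eq, ← insert_eq] at h

theorem δ_union_image_le {α : Type*} (C : Finset α) (g h : α → X) (T : Finset X) :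
    D.δ (T ∪ C.image g) ≤ D.δ (T ∪ C.image h) + ∑ c ∈ C, D.δ {h c, g c} := by
  induction C using Finset.induction generalizing T with
  | empty => simp
  | insert a C ha ih =>
    rw [image_insert, image_insert, sum_insert ha, union_insert, union_insert]
    calc D.δ (insert (g a) (T ∪ C.image g))
        ≤ D.δ (insert (h a) T ∪ C.image g) + D.δ {h a, g a} := by
          rw [insert_union]; exact D.δ_insert_le _ _ _
      _ ≤ D.δ (insert (h a) T ∪ C.image h) + ∑ c ∈ C, D.δ {h c, g c}
            + D.δ {h a, g a} := by
          gcongr; exact ih _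
      _ = D.δ (insert (h a) (T ∪ C.image h))
            + (D.δ {h a, g a} + ∑ c ∈ C, D.δ {h c, g c}) := by
          rw [insert_union]; ring

theorem abs_δ_image_sub_le {α : Type*} (C : Finset α) (g h : α → X) :
    |D.δ (C.image g) - D.δ (C.image h)| ≤ ∑ c ∈ C, D.δ {g c, h c} := by
  have h₁ := D.δ_union_image_le C g h ∅
  have h₂ := D.δ_union_image_le C h g ∅
  simp only [empty_union, pair_comm (h _)] at h₁ h₂
  rw [abs_sub_le_iff]
  constructor <;> linarith

noncomputable abbrev toMetricSpace : MetricSpace X where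
  dist x y := D.δ {x, y}
  dist_self x := by simpa using D.δ_singleton x
  dist_comm x y := by simp only [pair_comm]
  dist_triangle := D.δ_pair_triangle
  eq_of_dist_eq_zero := D.eq_of_δ_pair_eq_zero

theorem isAdmissible_δ_insert (x : X) : IsAdmissible D (fun A => D.δ (insert x A)) where
  empty := by simpa using D.δ_singleton x
  le A := D.δ_le_δ_insert A x
  tri A B C hC := by
    simpa only [insert_union, union_comm C] using D.triangle (insert x A) C B hC
  subadd A B := by
    simpa [insert_union, ← insert_eq] using D.triangle (insert x A) {x} B (by simp)

end Basic

section PartialIso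

variable {X : Type*} {D : Diversity X}

variable (D) in
def IsPartialIso (G : Set (X × X)) : Prop :=
  ∀ T : Finset (X × X), ↑T ⊆ G → D.δ (T.image Prod.fst) = D.δ (T.image Prod.snd)

theorem isPartialIso_range {S : Set X} (ψ : S → X)
    (hψ : ∀ B : Finset S, D.δ (B.image fun b => ψ b) = D.δ (B.image Subtype.val)) :
    D.IsPartialIso (Set.range fun s : S => ((s : X), ψ s)) := by
  intro T hT
  rw [← Set.image_univ, subset_set_image_iff] at hT
  obtain ⟨B, -, rfl⟩ := hT
  simpa only [image_image, Function.comp_def] using (hψ B).symm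

theorem isPartialIso_iUnion {ι : Type*} [Nonempty ι] {G : ι → Set (X × X)}
    (hdir : Directed (· ⊆ ·) G) (hG : ∀ i, D.IsPartialIso (G i)) :
    D.IsPartialIso (⋃ i, G i) := fun T hT =>
  let ⟨i, hi⟩ := hdir.exists_mem_subset_of_finset_subset_biUnion hT
  hG i T hi

theorem isPartialIso_insert {P : Finset (X × X)} (hP : D.IsPartialIso ↑P) {x y : X}
    (h : ∀ S ⊆ P, D.δ (insert x (S.image Prod.fst)) = D.δ (insert y (S.image Prod.snd))) :
    D.IsPartialIso ↑(insert (x, y) P) := by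
  intro S hS
  rw [coe_subset, subset_insert_iff] at hS
  by_cases hxy : (x, y) ∈ S
  · rw [← insert_erase hxy, image_insert, image_insert]
    exact h _ hS
  · rw [erase_eq_of_notMem hxy] at hS
    exact hP S hS

namespace IsPartialIso

variable {G : Set (X × X)}

theorem image_swap (hG : D.IsPartialIso G) : D.IsPartialIso (Prod.swap '' G) := by
  intro T hT
  rw [Set.image_swap_eq_preimage_swap, ← Set.image_subset_iff, ← coe_image] at hT
  simpa only [image_image, Function.comp_def, Prod.fst_swap, Prod.snd_swap] using (hG _ hT).symm

theorem δ_pair (hG : D.IsPartialIso G) {p q : X × X} (hp : p ∈ G) (hq : q ∈ G) :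
    D.δ {p.1, q.1} = D.δ {p.2, q.2} := by
  simpa using hG {p, q} (by simp [Set.insert_subset_iff, hp, hq])

theorem injOn_snd (hG : D.IsPartialIso G) : Set.InjOn Prod.snd G := fun p hp q hq h =>
  Prod.ext (D.eq_of_δ_pair_eq_zero (by simpa [hG.δ_pair hp hq, h] using D.δ_singleton q.2)) h

theorem exists_insert (he : D.ExtensionProp) {P : Finset (X × X)} (hP : D.IsPartialIso ↑P)
    (x : X) : ∃ y, D.IsPartialIso ↑(insert (x, y) P) := by
  set R := P.image Prod.snd
  let pre : Finset X → Finset X := fun B => (P.filter (·.2 ∈ B)).image Prod.fst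
  have image_snd_filter : ∀ B ⊆ R, (P.filter (·.2 ∈ B)).image Prod.snd = B := fun B hB => by
    rw [← filter_image (p := (· ∈ B)), filter_mem_eq_inter, inter_eq_right.2 hB]
  have pre_image_snd : ∀ S ⊆ P, pre (S.image Prod.snd) = S.image Prod.fst := fun S hS => by
    simp only [pre]
    congr 1
    ext p
    simp only [mem_filter, mem_image]
    constructor
    · rintro ⟨hp, q, hq, hqp⟩
      rwa [← hP.injOn_snd (hS hq) hp hqp]
    · exact fun hp => ⟨hS hp, p, hp, rfl⟩
  have image_val_subset : ∀ B : Finset (R : Set X), B.image Subtype.val ⊆ R := fun B b hb => by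
    obtain ⟨a, -, rfl⟩ := mem_image.1 hb
    exact a.2
  have hadm : IsAdmissible (D.restrict R)
      ((fun A => D.δ (insert x A)) ∘ fun B => pre (B.image Subtype.val)) := by
    refine (D.isAdmissible_δ_insert x).comap _ (by simp [pre]) (fun A B => ?_) (fun B => ?_)
      (fun B hB => ?_)
    · simp only [pre, image_union, mem_union, filter_or]
    · refine (hP _ (filter_subset _ _)).trans ?_
      rw [image_snd_filter _ (image_val_subset B)]
      rfl
    · have := hB.image Subtype.val
      rw [← image_snd_filter _ (image_val_subset B), image_nonempty] at this
      exact this.image _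
  obtain ⟨y, hy⟩ := he R _ hadm
  have hy_of_subset : ∀ B ⊆ R, D.δ (insert y B) = D.δ (insert x (pre B)) := fun B hB => by
    lift B to Finset (R : Set X) using fun b hb => hB hb
    exact hy B
  refine ⟨y, isPartialIso_insert hP fun S hS => ?_⟩
  rw [hy_of_subset _ (image_subset_image hS), pre_image_snd S hS]

theorem exists_forth_back (he : D.ExtensionProp) {P : Finset (X × X)}
    (hP : D.IsPartialIso ↑P) (x : X) :
    ∃ Q : Finset (X × X), P ⊆ Q ∧ D.IsPartialIso ↑Q ∧
      x ∈ Prod.fst '' (Q : Set (X × X)) ∧ x ∈ Prod.snd '' (Q : Set (X × X)) := by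
  obtain ⟨y, hy⟩ := hP.exists_insert he x
  have hy_swap : D.IsPartialIso ↑((insert (x, y) P).image Prod.swap) := by
    simpa only [coe_image] using hy.image_swap
  obtain ⟨z, hz⟩ := hy_swap.exists_insert he x
  refine ⟨insert (z, x) (insert (x, y) P), (subset_insert _ _).trans (subset_insert _ _), ?_,
    ⟨(x, y), by simp⟩, ⟨(z, x), by simp⟩⟩
  simpa [Set.image_insert_eq, Set.image_image] using hz.image_swap

end IsPartialIso

theorem exists_isPartialIso_back_and_forth (he : D.ExtensionProp) {P₀ : Finset (X × X)}
    (hP₀ : D.IsPartialIso ↑P₀) (u : ℕ → X) :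
    ∃ G : Set (X × X), D.IsPartialIso G ∧ ↑P₀ ⊆ G ∧
      Set.range u ⊆ Prod.fst '' G ∧ Set.range u ⊆ Prod.snd '' G := by
  choose! next hnext using fun (P : Finset (X × X)) (hP : D.IsPartialIso ↑P) (x : X) =>
    IsPartialIso.exists_forth_back he hP x
  let P : ℕ → Finset (X × X) := fun n =>
    Nat.rec (motive := fun _ => Finset (X × X)) P₀ (fun k Q => next Q (u k)) n
  have hP : ∀ n, D.IsPartialIso (P n : Set (X × X)) := by
    intro n
    induction n with
    | zero => exact hP₀
    | succ n ih => exact (hnext _ ih _).2.1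
  have hmono : Monotone fun n => (P n : Set (X × X)) :=
    monotone_nat_of_le_succ fun n => coe_subset.2 (hnext _ (hP n) _).1
  refine ⟨⋃ n, ↑(P n), isPartialIso_iUnion hmono.directed_le hP,
    Set.subset_iUnion (fun n => (P n : Set (X × X))) 0, ?_, ?_⟩
  · rintro _ ⟨n, rfl⟩
    exact Set.image_mono (Set.subset_iUnion _ (n + 1)) (hnext _ (hP n) _).2.2.1
  · rintro _ ⟨n, rfl⟩
    exact Set.image_mono (Set.subset_iUnion _ (n + 1)) (hnext _ (hP n) _).2.2.2

end PartialIso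

section CompatibleMetric

variable {X : Type*} [MetricSpace X] {D : Diversity X}

theorem CompleteD.completeSpace (hD : ∀ x y, D.δ {x, y} = dist x y) (h : D.CompleteD) :
    CompleteSpace X := by
  refine Metric.complete_of_cauchySeq_tendsto fun u hu => ?_
  obtain ⟨x, hx⟩ := h u (by simpa only [hD] using Metric.cauchySeq_iff.1 hu)
  exact ⟨x, Metric.tendsto_atTop.2 (by simpa only [hD] using hx)⟩

theorem SeparableD.separableSpace (hD : ∀ x y, D.δ {x, y} = dist x y) (h : D.SeparableD) :
    TopologicalSpace.SeparableSpace X := by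
  obtain ⟨s, hs, hdense⟩ := h
  refine ⟨s, hs, Metric.dense_iff.2 fun x r hr => ?_⟩
  obtain ⟨y, hy, hxy⟩ := hdense x r hr
  exact ⟨y, by rwa [Metric.mem_ball', ← hD], hy⟩

theorem tendsto_δ_image (hD : ∀ x y, D.δ {x, y} = dist x y) {α ι : Type*} {l : Filter ι}
    (C : Finset α) {g : ι → α → X} {g₀ : α → X}
    (hg : ∀ c ∈ C, Tendsto (fun k => g k c) l (𝓝 (g₀ c))) :
    Tendsto (fun k => D.δ (C.image (g k))) l (𝓝 (D.δ (C.image g₀))) := by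
  rw [tendsto_iff_dist_tendsto_zero]
  refine squeeze_zero (fun _ => dist_nonneg) (fun k => ?_)
    (by simpa using tendsto_finsetSum C fun c hc => tendsto_iff_dist_tendsto_zero.1 (hg c hc))
  rw [Real.dist_eq]
  simpa only [hD] using D.abs_δ_image_sub_le C (g k) g₀

namespace IsPartialIso

variable {G : Set (X × X)}

theorem dist_eq (hD : ∀ x y, D.δ {x, y} = dist x y) (hG : D.IsPartialIso G) {p q : X × X}
    (hp : p ∈ G) (hq : q ∈ G) : dist p.1 q.1 = dist p.2 q.2 := by
  rw [← hD, ← hD, hG.δ_pair hp hq]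

theorem cauchySeq_fst_iff (hD : ∀ x y, D.δ {x, y} = dist x y) (hG : D.IsPartialIso G)
    {v : ℕ → X × X} (hv : ∀ k, v k ∈ G) :
    CauchySeq (fun k => (v k).1) ↔ CauchySeq (fun k => (v k).2) := by
  have h : ∀ m n, dist (v m).1 (v n).1 = dist (v m).2 (v n).2 :=
    fun m n => hG.dist_eq hD (hv m) (hv n)
  simp only [Metric.cauchySeq_iff, h]

theorem exists_seq_tendsto [CompleteSpace X] (hD : ∀ x y, D.δ {x, y} = dist x y)
    (hG : D.IsPartialIso G) (hdom : Dense (Prod.fst '' G)) (x : X) :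
    ∃ y, ∃ v : ℕ → X × X, (∀ k, v k ∈ G) ∧
      Tendsto (fun k => (v k).1) atTop (𝓝 x) ∧ Tendsto (fun k => (v k).2) atTop (𝓝 y) := by
  obtain ⟨v, hv, hvx⟩ := hdom.exists_seq_mem_tendsto_image x
  obtain ⟨y, hy⟩ := cauchySeq_tendsto_of_complete ((hG.cauchySeq_fst_iff hD hv).1 hvx.cauchySeq)
  exact ⟨y, v, hv, hvx, hy⟩

theorem exists_bijective_extension [CompleteSpace X] (hD : ∀ x y, D.δ {x, y} = dist x y)
    (hG : D.IsPartialIso G) (hdom : Dense (Prod.fst '' G)) (hran : Dense (Prod.snd '' G)) :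
    ∃ Φ : X → X, Function.Bijective Φ ∧ (∀ C : Finset X, D.δ (C.image Φ) = D.δ C) ∧
      ∀ p ∈ G, Φ p.1 = p.2 := by
  choose Φ v hv hv₁ hv₂ using hG.exists_seq_tendsto hD hdom
  have hpres : ∀ C : Finset X, D.δ (C.image Φ) = D.δ C := by
    intro C
    have h₁ := tendsto_δ_image hD C (g := fun k c => (v c k).1) fun c _ => hv₁ c
    have h₂ := tendsto_δ_image hD C (g := fun k c => (v c k).2) fun c _ => hv₂ c
    have heq : ∀ k, D.δ (C.image fun c => (v c k).1) = D.δ (C.image fun c => (v c k).2) :=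
      fun k => by
        simpa only [image_image, Function.comp_def] using
          hG (C.image fun c => v c k) (by simpa [Set.subset_def] using fun c _ => hv c k)
    simp only [heq, image_id'] at h₁
    exact tendsto_nhds_unique h₂ h₁
  have hiso : Isometry Φ := Isometry.of_dist_eq fun a b => by
    simpa [hD] using hpres {a, b}
  have hext : ∀ p ∈ G, Φ p.1 = p.2 := fun p hp => by
    refine tendsto_nhds_unique (hv₂ p.1) (tendsto_iff_dist_tendsto_zero.2 ?_)
    simpa only [← hG.dist_eq hD (hv p.1 _) hp] using tendsto_iff_dist_tendsto_zero.1 (hv₁ p.1)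
  refine ⟨Φ, ⟨hiso.injective, fun y => ?_⟩, hpres, hext⟩
  obtain ⟨w, hw, hwy⟩ := hran.exists_seq_mem_tendsto_image y
  obtain ⟨x, hx⟩ := cauchySeq_tendsto_of_complete ((hG.cauchySeq_fst_iff hD hw).2 hwy.cauchySeq)
  refine ⟨x, tendsto_nhds_unique ((hiso.continuous.tendsto x).comp hx) ?_⟩
  simpa only [Function.comp_def, hext _ (hw _)] using hwy

end IsPartialIso

end CompatibleMetric

end Diversity

/-- Every Polish diversity with the extension property is ultrahomogeneous. -/
theorem stmt16 {U : Type*} (DU : Diversity U)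
    (hs : DU.SeparableD) (hc : DU.CompleteD) (he : DU.ExtensionProp) :
    DU.Ultrahomogeneous := by
  intro A A' φ _ hφ
  let _ : MetricSpace U := DU.toMetricSpace
  have hD : ∀ x y, DU.δ {x, y} = dist x y := fun _ _ => rfl
  have := hc.completeSpace hD
  have := hs.separableSpace hD
  rcases isEmpty_or_nonempty U with hU | hU
  · exact ⟨id, Function.bijective_id, by simp, fun a => isEmptyElim a.1⟩
  obtain ⟨u, hu⟩ := TopologicalSpace.exists_dense_seq U
  let P₀ := (univ : Finset (A : Set U)).image fun a : (A : Set U) => ((a : U), (φ a : U))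
  have hP₀ : DU.IsPartialIso ↑P₀ := by
    simpa [P₀] using Diversity.isPartialIso_range (fun a => (φ a : U)) hφ
  obtain ⟨G, hG, hP₀G, hdom, hran⟩ :=
    Diversity.exists_isPartialIso_back_and_forth he hP₀ u
  obtain ⟨Φ, hbij, hpres, hext⟩ :=
    hG.exists_bijective_extension hD (hu.mono hdom) (hu.mono hran)
  exact ⟨Φ, hbij, hpres, fun a => hext (a, φ a) (hP₀G (mem_image_of_mem _ (mem_univ a)))⟩
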